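/- Let n ≥ 2, 1 ≤ r < n, a < b positive integers, z ∈ Z_+, and y = (a^r, b^{n-r}). If c = (c_1,...,c_n) is a permutation-invariant parking sequence for (y;z), then c_i ≤ z + (r-1)a for all i ∈ [n]. -/

import Mathlib

open Finset

/-- The first empty spot `j` with `c ≤ j ≤ M` (street spots are `1..M`). -/
def firstEmpty (occ : Finset ℕ) (M c : ℕ) : Option ℕ :=
  (List.range' c (M + 1 - c)).find? (fun j => decide (j ∉ occ))

/-- Park cars with preferences `cs` and lengths `ys` on a street with spots `1..M`,
where `occ` is the set of already-occupied spots.  Returns the list of starting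
spots of the cars (in order of entry) if all cars can park. -/
def parkAux (M : ℕ) : Finset ℕ → List ℕ → List ℕ → Option (List ℕ)
  | _, [], [] => some []
  | occ, c :: cs, y :: ys =>
    match firstEmpty occ M c with
    | none => none
    | some j =>
      if (∀ i ∈ Finset.Ico j (j + y), i ∉ occ) ∧ j + y - 1 ≤ M then
        (parkAux M (occ ∪ Finset.Ico j (j + y)) cs ys).map (j :: ·)
      else none
  | _, _, _ => none

/-- Outcome of the parking process for length vector `ys`, preference sequence `cs`,
and trailer parameter `z` (the trailer occupies spots `1,…,z-1`); the street has
`z - 1 + ys.sum` spots. -/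
def parkResult (ys cs : List ℕ) (z : ℕ) : Option (List ℕ) :=
  parkAux (z - 1 + ys.sum) (Finset.Ico 1 z) cs ys

/-- `cs` is a parking sequence for `(ys; z)`. -/
def IsParkingSeq (ys cs : List ℕ) (z : ℕ) : Prop :=
  cs.length = ys.length ∧ (∀ c ∈ cs, 1 ≤ c) ∧ (parkResult ys cs z).isSome = true

/-- Starting spots of the standard (no-gap, in order) final configuration. -/
def standardStarts (z : ℕ) : List ℕ → List ℕ
  | [] => []
  | y :: ys => z :: standardStarts (z + y) ys

/-- `cs` parks `ys` in the standard order `T, C₁, …, Cₙ`. -/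
def ParksStandard (ys cs : List ℕ) (z : ℕ) : Prop :=
  parkResult ys cs z = some (standardStarts z ys)

/-- `cs` is a permutation-invariant parking sequence for `(ys; z)`. -/
def PermInvariant (ys cs : List ℕ) (z : ℕ) : Prop :=
  ∀ cs' : List ℕ, cs'.Perm cs → IsParkingSeq ys cs' z

/-- `cs` is a strong parking sequence for `{ys; z}`. -/
def StrongParkingSeq (ys cs : List ℕ) (z : ℕ) : Prop :=
  ∀ ys' : List ℕ, ys'.Perm ys → IsParkingSeq ys' cs z

/-- The nondecreasing rearrangement (order statistics) of a list. -/
def orderStats (l : List ℕ) : List ℕ :=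
  Multiset.sort (l : Multiset ℕ) (· ≤ ·)

/-- `xs` is a `u`-parking function. -/
def IsUPF (u xs : List ℕ) : Prop :=
  xs.length = u.length ∧ (∀ x ∈ xs, 1 ≤ x) ∧
    ∀ i < u.length, (orderStats xs).getD i 0 ≤ u.getD i 0

/-! Suppose some preference `c₀` exceeds `T = z + (r - 1) * a`. Because every rearrangement
parks, the first empty spot must always be claimed by some remaining car whose preference is
at most that spot; choosing such cars greedily, `r - 1` cars of length `a` fill the spots up
to `T` without using `c₀`. Giving `c₀` to the last car of length `a` now parks it at `c₀`,
and the gap `[T, c₀)` has to be tiled by cars of length `b`, so `b ∣ c₀ - T`. Giving that car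
instead to another car with preference at most `T`, and `c₀` to the first car of length `b`,
the gap `[T + a, c₀)` is tiled the same way, so `b ∣ c₀ - T - a`. Hence `b ∣ a`, which
contradicts `0 < a < b`. -/

theorem firstEmpty_eq_some_iff {occ : Finset ℕ} {M c j : ℕ} :
    firstEmpty occ M c = some j ↔
      j ∉ occ ∧ c ≤ j ∧ j ≤ M ∧ ∀ i, c ≤ i → i < j → i ∈ occ := by
  simp only [firstEmpty, List.find?_range'_eq_some, List.mem_range', decide_eq_true_eq,
    Bool.not_eq_true', decide_eq_false_iff_not, not_not]
  constructor
  · rintro ⟨hj, ⟨k, hk, rfl⟩, hmin⟩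
    exact ⟨hj, by omega, by omega, hmin⟩
  · rintro ⟨hj, hcj, hjM, hmin⟩
    exact ⟨hj, ⟨j - c, by omega, by omega⟩, hmin⟩

theorem isSome_parkAux_cons_iff {M c y : ℕ} {occ : Finset ℕ} {cs ys : List ℕ} :
    (parkAux M occ (c :: cs) (y :: ys)).isSome ↔
      ∃ j, firstEmpty occ M c = some j ∧ (∀ i ∈ Ico j (j + y), i ∉ occ) ∧ j + y - 1 ≤ M ∧
        (parkAux M (occ ∪ Ico j (j + y)) cs ys).isSome := by
  rw [parkAux]
  rcases firstEmpty occ M c with _ | j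
  · simp
  · by_cases hfit : (∀ i ∈ Ico j (j + y), i ∉ occ) ∧ j + y - 1 ≤ M
    · dsimp only
      rw [if_pos hfit, Option.isSome_map]
      simp only [Option.some.injEq, exists_eq_left']
      exact ⟨fun h => ⟨hfit.1, hfit.2, h⟩, fun h => h.2.2⟩
    · dsimp only
      simp only [if_neg hfit, Option.isSome_none, Bool.false_eq_true, false_iff, not_exists,
        not_and]
      rintro _ ⟨⟩ h1 h2
      exact absurd ⟨h1, h2⟩ hfit

theorem isSome_parkAux_Ico_one_cons_iff {M L c y : ℕ} {cs ys : List ℕ} (hc : 1 ≤ c)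
    (hy : 0 < y) :
    (parkAux M (Ico 1 L) (c :: cs) (y :: ys)).isSome ↔
      max c L + y ≤ M + 1 ∧
        (parkAux M (Ico 1 L ∪ Ico (max c L) (max c L + y)) cs ys).isSome := by
  rw [isSome_parkAux_cons_iff]
  constructor
  · rintro ⟨j, hj, -, hjM, h⟩
    obtain ⟨hjL, hcj, -, hmin⟩ := firstEmpty_eq_some_iff.1 hj
    obtain rfl : j = max c L := by
      by_contra hne
      have := hmin (max c L) (le_max_left c L) (by simp only [mem_Ico] at hjL; omega)
      simp only [mem_Ico] at this
      omega
    exact ⟨by omega, h⟩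
  · rintro ⟨hM, h⟩
    refine ⟨max c L, firstEmpty_eq_some_iff.2 ⟨?_, le_max_left c L, by omega, ?_⟩, ?_,
      by omega, h⟩
    · simp only [mem_Ico]
      omega
    · intro i hci hi
      simp only [mem_Ico]
      omega
    · intro i hi
      simp only [mem_Ico] at hi ⊢
      omega

theorem card_Icc_sdiff_union_Ico_le {M j y s : ℕ} {occ : Finset ℕ} (hj : 1 ≤ j)
    (hjM : j + y - 1 ≤ M) (hfree : ∀ i ∈ Ico j (j + y), i ∉ occ)
    (h : #(Icc 1 M \ occ) ≤ y + s) :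
    #(Icc 1 M \ (occ ∪ Ico j (j + y))) ≤ s := by
  have hsub : Ico j (j + y) ⊆ Icc 1 M \ occ := by
    intro i hi
    refine mem_sdiff.2 ⟨?_, hfree i hi⟩
    simp only [mem_Ico, mem_Icc] at hi ⊢
    omega
  rw [sdiff_union_distrib, ← Finset.sdiff_sdiff_left', card_sdiff_of_subset hsub, Nat.card_Ico]
  omega

/-- The car that eventually fills spot `S` must start there, as all spots below `S` are taken. -/
theorem exists_le_of_isSome_parkAux {M S : ℕ} (hS : S ∈ Icc 1 M) :
    ∀ {cs ys : List ℕ} {occ : Finset ℕ}, #(Icc 1 M \ occ) ≤ ys.sum → S ∉ occ →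
      Ico 1 S ⊆ occ → (parkAux M occ cs ys).isSome → ∃ c ∈ cs, c ≤ S
  | [], [], occ, hcard, hSocc, _, _ => by
    rw [List.sum_nil, Nat.le_zero, card_eq_zero, sdiff_eq_empty_iff_subset] at hcard
    exact absurd (hcard hS) hSocc
  | [], _ :: _, _, _, _, _, h => by simp [parkAux] at h
  | _ :: _, [], _, _, _, _, h => by simp [parkAux] at h
  | c :: cs, y :: ys, occ, hcard, hSocc, hpre, h => by
    obtain ⟨j, hj, hfree, hjM, h⟩ := isSome_parkAux_cons_iff.1 h
    obtain ⟨-, hcj, -, -⟩ := firstEmpty_eq_some_iff.1 hj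
    by_cases hjS : j ≤ S
    · exact ⟨c, List.mem_cons_self, by omega⟩
    have hS1 := (mem_Icc.1 hS).1
    obtain ⟨c', hc', hc'S⟩ := exists_le_of_isSome_parkAux hS
      (card_Icc_sdiff_union_Ico_le (by omega) hjM hfree (by simpa using hcard))
      (by simp only [mem_union, mem_Ico, not_or]; exact ⟨hSocc, by omega⟩)
      (hpre.trans subset_union_left) h
    exact ⟨c', List.mem_cons_of_mem c hc', hc'S⟩

/-- Since spot `G` and all spots below `L` are occupied, every car lies inside `[L, G)` or misses
it, so the free part of `[L, G)` is tiled by cars of length `b`. -/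
theorem dvd_card_Ico_sdiff_of_isSome_parkAux {M L G b : ℕ} (hL : 1 ≤ L) (hG : G ≤ M + 1) :
    ∀ {cs : List ℕ} {m : ℕ} {occ : Finset ℕ}, (∀ c ∈ cs, 1 ≤ c) → #(Icc 1 M \ occ) ≤ m * b →
      Ico 1 L ⊆ occ → G ∈ occ → (parkAux M occ cs (List.replicate m b)).isSome →
      b ∣ #(Ico L G \ occ)
  | [], 0, occ, _, hcard, _, _, _ => by
    rw [Nat.zero_mul, Nat.le_zero, card_eq_zero, sdiff_eq_empty_iff_subset] at hcard
    have hW : Ico L G ⊆ occ := by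
      refine Subset.trans (fun i hi => ?_) hcard
      simp only [mem_Ico, mem_Icc] at hi ⊢
      omega
    rw [sdiff_eq_empty_iff_subset.2 hW, card_empty]
    exact dvd_zero b
  | [], _ + 1, _, _, _, _, _, h => by simp [List.replicate_succ, parkAux] at h
  | _ :: _, 0, _, _, _, _, _, h => by simp [parkAux] at h
  | c :: cs, m + 1, occ, hpos, hcard, hpre, hGocc, h => by
    rw [List.replicate_succ] at h
    obtain ⟨j, hj, hfree, hjM, h⟩ := isSome_parkAux_cons_iff.1 h
    obtain ⟨hjocc, hcj, -, -⟩ := firstEmpty_eq_some_iff.1 hj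
    have hj1 : 1 ≤ j := (hpos c List.mem_cons_self).trans hcj
    have ih := dvd_card_Ico_sdiff_of_isSome_parkAux hL hG
      (fun x hx => hpos x (List.mem_cons_of_mem c hx))
      (card_Icc_sdiff_union_Ico_le hj1 hjM hfree (by rw [Nat.succ_mul] at hcard; omega))
      (hpre.trans subset_union_left) (mem_union_left _ hGocc) h
    have hLj : L ≤ j := by
      by_contra hjL
      exact hjocc (hpre (mem_Ico.2 ⟨hj1, by omega⟩))
    rw [sdiff_union_distrib, ← Finset.sdiff_sdiff_left'] at ih
    by_cases hGj : G ≤ j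
    · rwa [sdiff_eq_self_of_disjoint] at ih
      exact disjoint_left.2 fun i hi hi' => by
        simp only [mem_sdiff, mem_Ico] at hi hi'
        omega
    · have hjb : j + b ≤ G := by
        by_contra hbG
        exact hfree G (mem_Ico.2 ⟨by omega, by omega⟩) hGocc
      have hsub : Ico j (j + b) ⊆ Ico L G \ occ := fun i hi =>
        mem_sdiff.2 ⟨by simp only [mem_Ico] at hi ⊢; omega, hfree i hi⟩
      rw [card_sdiff_of_subset hsub, Nat.card_Ico, Nat.add_sub_cancel_left] at ih
      have hle : b ≤ #(Ico L G \ occ) := by simpa using card_le_card hsub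
      simpa [Nat.sub_add_cancel hle] using Nat.dvd_add ih (dvd_refl b)

def ParksInAnyOrder (M : ℕ) (occ : Finset ℕ) (cs ys : List ℕ) : Prop :=
  (∀ c ∈ cs, 1 ≤ c) ∧ ∀ cs' : List ℕ, cs'.Perm cs → (parkAux M occ cs' ys).isSome

theorem PermInvariant.parksInAnyOrder {ys cs : List ℕ} {z : ℕ} (h : PermInvariant ys cs z) :
    ParksInAnyOrder (z - 1 + ys.sum) (Ico 1 z) cs ys :=
  ⟨(h cs (List.Perm.refl cs)).2.1, fun cs' hp => (h cs' hp).2.2⟩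

namespace ParksInAnyOrder

variable {M L c y : ℕ} {cs ys : List ℕ}

theorem erase (h : ParksInAnyOrder M (Ico 1 L) cs (y :: ys)) (hc : c ∈ cs) (hy : 0 < y) :
    max c L + y ≤ M + 1 ∧
      ParksInAnyOrder M (Ico 1 L ∪ Ico (max c L) (max c L + y)) (cs.erase c) ys := by
  have key (cs' : List ℕ) (hp : cs'.Perm (cs.erase c)) := (isSome_parkAux_Ico_one_cons_iff
    (h.1 c hc) hy).1 (h.2 _ ((hp.cons c).trans (List.perm_cons_erase hc).symm))
  exact ⟨(key _ (List.Perm.refl _)).1, fun x hx => h.1 x (List.mem_of_mem_erase hx),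
    fun cs' hp => (key cs' hp).2⟩

theorem exists_le_erase (h : ParksInAnyOrder M (Ico 1 L) cs (y :: ys)) (hL : 1 ≤ L)
    (hy : 0 < y) (hsum : L + y + ys.sum = M + 1) :
    ∃ c ∈ cs, c ≤ L ∧ ParksInAnyOrder M (Ico 1 (L + y)) (cs.erase c) ys := by
  have hfree : Icc 1 M \ Ico 1 L = Icc L M := by
    ext i
    simp only [mem_sdiff, mem_Icc, mem_Ico]
    omega
  obtain ⟨c, hc, hcL⟩ := exists_le_of_isSome_parkAux (mem_Icc.2 ⟨hL, by omega⟩)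
    (by rw [hfree, Nat.card_Icc, List.sum_cons]; omega) (by simp) Subset.rfl
    (h.2 cs (List.Perm.refl cs))
  have h' := (h.erase hc hy).2
  rw [max_eq_right hcL, Ico_union_Ico_eq_Ico hL (by omega)] at h'
  exact ⟨c, hc, hcL, h'⟩

theorem exists_mem_of_replicate_append {c₀ : ℕ} (hy : 0 < y) :
    ∀ {k L : ℕ} {cs : List ℕ}, ParksInAnyOrder M (Ico 1 L) cs (List.replicate k y ++ ys) →
      1 ≤ L → L + k * y + ys.sum = M + 1 → c₀ ∈ cs → L + k * y ≤ c₀ →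
      ∃ rest, c₀ ∈ rest ∧ ParksInAnyOrder M (Ico 1 (L + k * y)) rest ys
  | 0, L, cs, h, _, _, hc₀, _ => ⟨cs, hc₀, by simpa using h⟩
  | k + 1, L, cs, h, hL, hsum, hc₀, hle => by
    rw [List.replicate_succ, List.cons_append] at h
    rw [Nat.succ_mul] at hsum hle
    obtain ⟨c, -, hcL, h'⟩ := h.exists_le_erase hL hy
      (by rw [List.sum_append, List.sum_replicate, smul_eq_mul]; omega)
    obtain ⟨rest, hrest, h''⟩ := exists_mem_of_replicate_append hy h' (by omega) (by omega)
      ((List.mem_erase_of_ne (by omega)).2 hc₀) (by omega)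
    refine ⟨rest, hrest, ?_⟩
    rwa [Nat.succ_mul, ← Nat.add_assoc, Nat.add_right_comm L]

theorem dvd_sub {b m : ℕ} (h : ParksInAnyOrder M (Ico 1 L) cs (y :: List.replicate m b))
    (hc : c ∈ cs) (hL : 1 ≤ L) (hLc : L ≤ c) (hy : 0 < y) (hsum : M + 1 ≤ L + y + m * b) :
    b ∣ c - L := by
  obtain ⟨hcM, h'⟩ := h.erase hc hy
  rw [max_eq_left hLc] at hcM h'
  have hfree : Icc 1 M \ (Ico 1 L ∪ Ico c (c + y)) = Icc L M \ Ico c (c + y) := by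
    ext i
    simp only [mem_sdiff, mem_union, mem_Icc, mem_Ico]
    omega
  have hsub : Ico c (c + y) ⊆ Icc L M := fun i hi => by
    simp only [mem_Ico, mem_Icc] at hi ⊢
    omega
  have hdvd := dvd_card_Ico_sdiff_of_isSome_parkAux (G := c) hL (by omega) h'.1
    (by rw [hfree, card_sdiff_of_subset hsub, Nat.card_Icc, Nat.card_Ico]; omega)
    subset_union_left (mem_union_right _ (mem_Ico.2 ⟨le_rfl, by omega⟩))
    (h'.2 _ (List.Perm.refl _))
  have hgap : Ico L c \ (Ico 1 L ∪ Ico c (c + y)) = Ico L c := by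
    ext i
    simp only [mem_sdiff, mem_union, mem_Ico]
    omega
  rwa [hgap, Nat.card_Ico] at hdvd

end ParksInAnyOrder

theorem stmt12_general (n r a b z : ℕ) (hr1 : 1 ≤ r) (hrn : r < n)
    (ha : 0 < a) (hab : a < b) (hz : 0 < z) (cs : List ℕ)
    (hperm : PermInvariant (List.replicate r a ++ List.replicate (n - r) b) cs z) :
    ∀ c ∈ cs, c ≤ z + (r - 1) * a := by
  intro c₀ hc₀
  by_contra! hgt
  obtain ⟨k, rfl⟩ : ∃ k, r = k + 1 := ⟨r - 1, by omega⟩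
  obtain ⟨m, hm⟩ : ∃ m, n - (k + 1) = m + 1 := ⟨n - (k + 1) - 1, by omega⟩
  rw [hm, List.replicate_succ', List.append_assoc, List.singleton_append] at hperm
  rw [Nat.add_sub_cancel] at hgt
  have hmb : (m + 1) * b = m * b + b := add_one_mul m b
  have hsum : (List.replicate (m + 1) b).sum = m * b + b := by simp [hmb]
  have h₀ := hperm.parksInAnyOrder
  simp only [List.sum_append, List.sum_cons, hsum, List.sum_replicate, smul_eq_mul] at h₀
  obtain ⟨rest, hc₀rest, hprefix⟩ := h₀.exists_mem_of_replicate_append ha hz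
    (by rw [List.sum_cons, hsum]; omega) hc₀ hgt.le
  have hdvd₁ : b ∣ c₀ - (z + k * a) := hprefix.dvd_sub hc₀rest (by omega) hgt.le ha (by omega)
  have hgap := Nat.le_of_dvd (by omega) hdvd₁
  obtain ⟨f, -, hf, hprefix'⟩ := hprefix.exists_le_erase (by omega) ha (by omega)
  rw [List.replicate_succ] at hprefix'
  have hdvd₂ : b ∣ c₀ - (z + k * a + a) :=
    hprefix'.dvd_sub ((List.mem_erase_of_ne (by omega)).2 hc₀rest) (by omega) (by omega)
      (by omega) (by omega)
  have hdvda : b ∣ a := by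
    simpa [show c₀ - (z + k * a) - (c₀ - (z + k * a + a)) = a by omega]
      using Nat.dvd_sub hdvd₁ hdvd₂
  exact absurd (Nat.le_of_dvd ha hdvda) (by omega)

theorem stmt12 (n r a b z : ℕ) (hn : 2 ≤ n) (hr1 : 1 ≤ r) (hrn : r < n)
    (ha : 0 < a) (hab : a < b) (hz : 0 < z) (cs : List ℕ)
    (hperm : PermInvariant (List.replicate r a ++ List.replicate (n - r) b) cs z) :
    ∀ c ∈ cs, c ≤ z + (r - 1) * a :=
  stmt12_general n r a b z hr1 hrn ha hab hz cs hperm
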